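/- arXiv:2212.14137 — 6 statements merged into one kernel-verified Lean document; each statement's English description precedes it below -/
import Mathlib

section
/- Let A be an associative unital ℂ-algebra of countable dimension, let G be a finite group acting on A by ℂ-algebra automorphisms, and let M be a simple A-module such that for every g ∈ G with g ≠ 1 the twisted module g∘M is not isomorphic to M as an A-module. Then M is simple as a module over the fixed-point subalgebra A^G. -/
open scoped Cardinal

/-- The fixed-point subalgebra `A^G` of a group `G` acting on a `ℂ`-algebra `A`
by `ℂ`-algebra automorphisms. -/
def fixedSubalgebra {A : Type*} [Ring A] [Algebra ℂ A] {G : Type*} [Group G]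
    (ρ : G →* (A ≃ₐ[ℂ] A)) : Subalgebra ℂ A where
  carrier := {a | ∀ g : G, ρ g a = a}
  mul_mem' := by
    intro x y hx hy g
    simp [map_mul, hx g, hy g]
  add_mem' := by
    intro x y hx hy g
    simp [map_add, hx g, hy g]
  algebraMap_mem' := by
    intro r g
    simp

section Aux

variable {A : Type*} [Ring A] [Algebra ℂ A] {G : Type*} [Group G]
  {M : Type*} [AddCommGroup M] [Module A M]

private lemma rho_mul_apply (ρ : G →* (A ≃ₐ[ℂ] A)) (g g' : G) (a : A) :
    ρ (g * g') a = ρ g (ρ g' a) := by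
  rw [map_mul, AlgEquiv.aut_mul]; rfl

private lemma rho_apply_inv (ρ : G →* (A ≃ₐ[ℂ] A)) (h : G) (a : A) :
    ρ h (ρ h⁻¹ a) = a := by
  rw [← rho_mul_apply, mul_inv_cancel, map_one]; rfl

private lemma exists_smul_eq_of_simple [IsSimpleModule A M]
    (m : M) (hm : m ≠ 0) (m' : M) : ∃ x : A, x • m = m' := by
  have hspan : Submodule.span A {m} = ⊤ := by
    rcases eq_bot_or_eq_top (Submodule.span A {m}) with h | h
    · exact absurd (h ▸ Submodule.mem_span_singleton_self m) (by simpa using hm)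
    · exact h
  have : m' ∈ Submodule.span A ({m} : Set M) := hspan ▸ Submodule.mem_top
  exact Submodule.mem_span_singleton.mp this

/-- Key density-type lemma: if no nontrivially twisted module is isomorphic to `M`, then
for a finite set `S` of nontrivial group elements one can find `x ∈ A` acting as prescribed
on `m` while all the `S`-twists of `x` annihilate `m`. -/
private lemma key_density [IsSimpleModule A M] (ρ : G →* (A ≃ₐ[ℂ] A))
    (hM : ∀ g : G, g ≠ 1 →
      ¬ ∃ φ : M ≃+ M, ∀ (a : A) (m : M), φ (a • m) = (ρ g a) • φ m)
    (S : Finset G) :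
    (1 : G) ∉ S → ∀ m : M, m ≠ 0 → ∀ m' : M,
      ∃ x : A, x • m = m' ∧ ∀ g ∈ S, (ρ g x) • m = 0 := by
  classical
  induction S using Finset.induction_on with
  | empty =>
    intro _ m hm m'
    obtain ⟨x, hx⟩ := exists_smul_eq_of_simple (A := A) m hm m'
    exact ⟨x, hx, by simp⟩
  | @insert h S' hhS ih =>
    intro hS m hm m'
    have h1 : h ≠ 1 := fun e => hS (by simp [e])
    have hS' : (1 : G) ∉ S' := fun e => hS (Finset.mem_insert_of_mem e)
    have IH : ∀ m' : M, ∃ x : A, x • m = m' ∧ ∀ g ∈ S', (ρ g x) • m = 0 := ih hS' m hm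
    -- The submodule of elements reachable with full annihilation condition.
    set W : Submodule A M :=
      { carrier := {u | ∃ x : A, x • m = u ∧ ∀ g ∈ insert h S', (ρ g x) • m = 0}
        add_mem' := by
          rintro u v ⟨x, hx1, hx2⟩ ⟨y, hy1, hy2⟩
          exact ⟨x + y, by rw [add_smul, hx1, hy1],
            fun g hg => by rw [map_add, add_smul, hx2 g hg, hy2 g hg, add_zero]⟩
        zero_mem' := ⟨0, by simp, by simp⟩
        smul_mem' := by
          rintro a u ⟨x, hx1, hx2⟩
          exact ⟨a * x, by rw [mul_smul, hx1],
            fun g hg => by rw [map_mul, mul_smul, hx2 g hg, smul_zero]⟩ } with hWdef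
    have hmem : ∀ u ∈ W, ∃ x : A, x • m = u ∧ ∀ g ∈ insert h S', (ρ g x) • m = 0 := by
      intro u hu; exact hu
    rcases eq_bot_or_eq_top W with hbot | htop
    · -- derive a contradiction: build a twisted isomorphism
      exfalso
      have dagger : ∀ x : A, (∀ g ∈ S', (ρ g x) • m = 0) → (ρ h x) • m = 0 → x • m = 0 := by
        intro x hx hxh
        have hxW : x • m ∈ W := ⟨x, rfl, fun g hg => by
          rcases Finset.mem_insert.mp hg with rfl | hg
          · exact hxh
          · exact hx g hg⟩
        rw [hbot] at hxW
        simpa using hxW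
      set U : Submodule A M :=
        { carrier := {u | ∃ x : A, (∀ g ∈ S', (ρ g x) • m = 0) ∧ (ρ h x) • m = u}
          add_mem' := by
            rintro u v ⟨x, hx1, hx2⟩ ⟨y, hy1, hy2⟩
            exact ⟨x + y, fun g hg => by rw [map_add, add_smul, hx1 g hg, hy1 g hg, add_zero],
              by rw [map_add, add_smul, hx2, hy2]⟩
          zero_mem' := ⟨0, by simp, by simp⟩
          smul_mem' := by
            rintro a u ⟨x, hx1, hx2⟩
            refine ⟨ρ h⁻¹ a * x, fun g hg => by rw [map_mul, mul_smul, hx1 g hg, smul_zero], ?_⟩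
            rw [map_mul, mul_smul, hx2, rho_apply_inv] } with hUdef
      rcases eq_bot_or_eq_top U with hUbot | hUtop
      · -- then all twists annihilate, contradicting `IH` reaching `m ≠ 0`
        obtain ⟨x, hx1, hx2⟩ := IH m
        have : (ρ h x) • m ∈ U := ⟨x, hx2, rfl⟩
        rw [hUbot] at this
        have hx0 : x • m = 0 := dagger x hx2 (by simpa using this)
        exact hm (by rw [← hx1, hx0])
      · -- U = ⊤ : construct the twisted isomorphism θ
        have hUall : ∀ u : M, ∃ x : A, (∀ g ∈ S', (ρ g x) • m = 0) ∧ (ρ h x) • m = u := by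
          intro u
          have : u ∈ U := hUtop ▸ Submodule.mem_top
          exact this
        have hwd : ∀ x y : A, (∀ g ∈ S', (ρ g x) • m = 0) → (∀ g ∈ S', (ρ g y) • m = 0) →
            (ρ h x) • m = (ρ h y) • m → x • m = y • m := by
          intro x y hx hy hxy
          have := dagger (x - y)
            (fun g hg => by rw [map_sub, sub_smul, hx g hg, hy g hg, sub_zero])
            (by rw [map_sub, sub_smul, hxy, sub_self])
          rwa [sub_smul, sub_eq_zero] at this
        set θ : M → M := fun u => (hUall u).choose • m with hθdef
        have hθ : ∀ x : A, (∀ g ∈ S', (ρ g x) • m = 0) → ∀ u : M, (ρ h x) • m = u →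
            θ u = x • m := by
          intro x hx u hu
          exact hwd _ x (hUall u).choose_spec.1 hx (by rw [(hUall u).choose_spec.2, ← hu])
        have hadd : ∀ u v : M, θ (u + v) = θ u + θ v := by
          intro u v
          obtain ⟨x, hx, hxu⟩ := hUall u
          obtain ⟨y, hy, hyv⟩ := hUall v
          rw [hθ x hx u hxu, hθ y hy v hyv, ← add_smul]
          exact hθ (x + y)
            (fun g hg => by rw [map_add, add_smul, hx g hg, hy g hg, add_zero])
            (u + v) (by rw [map_add, add_smul, hxu, hyv])
        have htw : ∀ (a : A) (u : M), θ (a • u) = (ρ h⁻¹ a) • θ u := by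
          intro a u
          obtain ⟨x, hx, hxu⟩ := hUall u
          have hx' : ∀ g ∈ S', (ρ g (ρ h⁻¹ a * x)) • m = 0 := fun g hg => by
            rw [map_mul, mul_smul, hx g hg, smul_zero]
          have hmain : (ρ h (ρ h⁻¹ a * x)) • m = a • u := by
            rw [map_mul, mul_smul, hxu, rho_apply_inv]
          rw [hθ _ hx' _ hmain, hθ x hx u hxu, mul_smul]
        set Θ : M →+ M := AddMonoidHom.mk' θ hadd with hΘdef
        have hΘapp : ∀ u, Θ u = θ u := fun u => rfl
        have hsurj : Function.Surjective θ := by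
          intro v
          obtain ⟨x, hx1, hx2⟩ := IH v
          exact ⟨(ρ h x) • m, by rw [hθ x hx2 _ rfl, hx1]⟩
        -- the kernel of θ is an honest A-submodule
        set K : Submodule A M :=
          { carrier := {u | θ u = 0}
            add_mem' := by intro u v hu hv; simp only [Set.mem_setOf_eq] at *
                           rw [hadd, hu, hv, add_zero]
            zero_mem' := by
              show θ 0 = 0
              have := hθ 0 (fun g _ => by simp) 0 (by simp)
              simpa using this
            smul_mem' := by
              intro a u hu
              show θ (a • u) = 0
              rw [htw, hu, smul_zero] } with hKdef
      -- K ≠ ⊤ since θ is surjective and M is nontrivial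
        have hnt : Nontrivial M := IsSimpleModule.nontrivial A M
        have hKne : K ≠ ⊤ := by
          intro hKtop
          obtain ⟨v, hv⟩ := exists_ne (0 : M)
          obtain ⟨u, hu⟩ := hsurj v
          have : u ∈ K := hKtop ▸ Submodule.mem_top
          exact hv (by rw [← hu]; exact this)
        have hKbot : K = ⊥ := (eq_bot_or_eq_top K).resolve_right hKne
        have hinj : Function.Injective θ := by
          intro u v huv
          have : Θ (u - v) = 0 := by rw [map_sub, hΘapp, hΘapp, huv, sub_self]
          have hK : u - v ∈ K := this
          rw [hKbot] at hK
          have : u - v = 0 := by simpa using hK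
          exact sub_eq_zero.mp this
        have hbij : Function.Bijective Θ := ⟨hinj, hsurj⟩
        refine hM h⁻¹ (by simpa using h1) ⟨AddEquiv.ofBijective Θ hbij, ?_⟩
        intro a u
        exact htw a u
    · -- W = ⊤ gives the conclusion directly
      have : m' ∈ W := htop ▸ Submodule.mem_top
      obtain ⟨x, hx1, hx2⟩ := this
      exact ⟨x, hx1, hx2⟩

end Aux

/-- Let `A` be an associative unital `ℂ`-algebra of countable dimension,
`G` a finite group acting on `A` by `ℂ`-algebra automorphisms (via `ρ`), and `M` a simple
`A`-module such that for every `g ≠ 1` the `g`-twisted module `g ∘ M` is not isomorphic to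
`M` as an `A`-module (an isomorphism `g ∘ M ≅ M` is precisely an additive bijection
`φ : M → M` with `φ (a • m) = (g • a) • φ m`).  Then `M` is simple as a module over the
fixed-point subalgebra `A^G`. -/
theorem simple_over_fixed_subalgebra_of_not_stable
    {A : Type*} [Ring A] [Algebra ℂ A]
    (hA : Module.rank ℂ A ≤ ℵ₀)
    {G : Type*} [Group G] [Finite G] (ρ : G →* (A ≃ₐ[ℂ] A))
    {M : Type*} [AddCommGroup M] [Module A M] [IsSimpleModule A M]
    (hM : ∀ g : G, g ≠ 1 →
      ¬ ∃ φ : M ≃+ M, ∀ (a : A) (m : M), φ (a • m) = (ρ g a) • φ m) :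
    IsSimpleModule (fixedSubalgebra ρ) M := by
  classical
  have : Fintype G := Fintype.ofFinite G
  have hnt : Nontrivial M := IsSimpleModule.nontrivial A M
  obtain ⟨m₀, hm₀⟩ := exists_ne (0 : M)
  have hbt : (⊥ : Submodule (fixedSubalgebra ρ) M) ≠ ⊤ := by
    intro e
    have : m₀ ∈ (⊥ : Submodule (fixedSubalgebra ρ) M) := e ▸ Submodule.mem_top
    exact hm₀ (by simpa using this)
  haveI : Nontrivial (Submodule (fixedSubalgebra ρ) M) := ⟨⊥, ⊤, hbt⟩
  refine { eq_bot_or_eq_top := ?_ }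
  intro N
  by_cases hN : N = ⊥
  · exact Or.inl hN
  right
  obtain ⟨n, hnN, hn0⟩ := Submodule.exists_mem_ne_zero_of_ne_bot hN
  rw [Submodule.eq_top_iff']
  intro m'
  obtain ⟨x, hx1, hx2⟩ := key_density ρ hM (Finset.univ.erase 1) (by simp) n hn0 m'
  set y : A := ∑ g : G, ρ g x with hydef
  have hy : y ∈ fixedSubalgebra ρ := by
    intro g'
    rw [hydef, map_sum]
    exact Fintype.sum_equiv (Equiv.mulLeft g') _ _ fun g => by
      rw [Equiv.coe_mulLeft, rho_mul_apply]
  have hyn : y • n = m' := by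
    rw [hydef, Finset.sum_smul, Finset.sum_eq_single (1 : G)]
    · rw [map_one]
      have : (1 : A ≃ₐ[ℂ] A) x = x := rfl
      rw [this, hx1]
    · intro g _ hg
      exact hx2 g (Finset.mem_erase.mpr ⟨hg, Finset.mem_univ g⟩)
    · intro hg
      exact absurd (Finset.mem_univ 1) hg
  have : (⟨y, hy⟩ : fixedSubalgebra ρ) • n = m' := by
    rw [Subalgebra.smul_def]
    exact hyn
  exact this ▸ N.smul_mem _ hnN
end

section
/- Let A be an associative unital ℂ-algebra of countable dimension, let G be a finite group acting on A by ℂ-algebra automorphisms, let M be a simple A-module, and let ψ : G → GL_ℂ(M) be a group homomorphism into the group of ℂ-linear bijections of M satisfying ψ(g)(a•m) = (g·a)•ψ(g)(m) for all g ∈ G, a ∈ A, m ∈ M. Then for every group homomorphism λ : G → ℂ^× the simultaneous eigenspace M^λ = {m ∈ M : ψ(g)m = λ(g)m for all g ∈ G} is either zero or a simple module over the fixed-point subalgebra A^G. -/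
open scoped Cardinal

/-- For a `G`-equivariant action `ψ : G → GL_ℂ(M)` on an `A`-module `M`
(equivariance `hψ : ψ(g)(a • m) = (g·a) • ψ(g)(m)`) and a group homomorphism
`λ : G → ℂˣ`, the simultaneous eigenspace
`M^λ = {m ∈ M : ψ(g) m = λ(g) m for all g}`, which is a module over the fixed-point
subalgebra `A^G`. -/
def eigenspaceOfCharacter {A : Type*} [Ring A] [Algebra ℂ A] {G : Type*} [Group G]
    (ρ : G →* (A ≃ₐ[ℂ] A))
    {M : Type*} [AddCommGroup M] [Module ℂ M] [Module A M] [IsScalarTower ℂ A M]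
    (ψ : G →* (M ≃ₗ[ℂ] M))
    (hψ : ∀ (g : G) (a : A) (m : M), ψ g (a • m) = (ρ g a) • ψ g m)
    (lam : G →* ℂˣ) : Submodule (fixedSubalgebra ρ) M where
  carrier := {m | ∀ g : G, ψ g m = (lam g : ℂ) • m}
  add_mem' := by
    intro x y hx hy g
    simp [map_add, hx g, hy g, smul_add]
  zero_mem' := by simp
  smul_mem' := by
    rintro ⟨a, ha⟩ m hm g
    show ψ g (a • m) = (lam g : ℂ) • (a • m)
    rw [hψ g a m, ha g, hm g, smul_comm]

/-! If `x, y ∈ M^λ` and `a • x = y`, applying `ψ g` shows `(g·a) • x = y` for every `g`, because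
`x` and `y` are both rescaled by the same scalar `λ(g)`. Hence the group average of `a`, an
element of `A^G`, still sends `x` to `y`. Since `M` is simple, any nonzero `x ∈ M^λ` reaches
every `y ∈ M^λ` through some `a ∈ A`, so a nonzero `M^λ` is simple over `A^G`. -/

section Average

variable {A : Type*} [Ring A] [Algebra ℂ A] {G : Type*} [Group G] [Fintype G]

noncomputable def groupAverage (ρ : G →* (A ≃ₐ[ℂ] A)) (a : A) : A :=
  (Fintype.card G : ℂ)⁻¹ • ∑ g : G, ρ g a

theorem groupAverage_mem_fixedSubalgebra (ρ : G →* (A ≃ₐ[ℂ] A)) (a : A) :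
    groupAverage ρ a ∈ fixedSubalgebra ρ := by
  intro h
  rw [groupAverage, map_smul, map_sum]
  congr 1
  exact Fintype.sum_bijective (h * ·) (Group.mulLeft_bijective h) _ _
    fun g => by rw [map_mul]; rfl

theorem groupAverage_smul_of_forall_smul_eq {M : Type*} [AddCommGroup M] [Module ℂ M]
    [Module A M] [IsScalarTower ℂ A M] {ρ : G →* (A ≃ₐ[ℂ] A)} {a : A} {x y : M}
    (h : ∀ g, ρ g a • x = y) : groupAverage ρ a • x = y := by
  rw [groupAverage, smul_assoc, Finset.sum_smul]
  simp only [h, Finset.sum_const, Finset.card_univ, ← Nat.cast_smul_eq_nsmul ℂ, smul_smul]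
  rw [inv_mul_cancel₀ (Nat.cast_ne_zero.mpr Fintype.card_ne_zero), one_smul]

end Average

theorem map_smul_eq_of_mem_eigenspaceOfCharacter {A : Type*} [Ring A] [Algebra ℂ A]
    {G : Type*} [Group G] (ρ : G →* (A ≃ₐ[ℂ] A))
    {M : Type*} [AddCommGroup M] [Module ℂ M] [Module A M] [IsScalarTower ℂ A M]
    (ψ : G →* (M ≃ₗ[ℂ] M))
    (hψ : ∀ (g : G) (a : A) (m : M), ψ g (a • m) = (ρ g a) • ψ g m)
    (lam : G →* ℂˣ) {x y : M} (hx : x ∈ eigenspaceOfCharacter ρ ψ hψ lam)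
    (hy : y ∈ eigenspaceOfCharacter ρ ψ hψ lam) {a : A} (ha : a • x = y) (g : G) :
    ρ g a • x = y := by
  have h := hψ g a x
  rw [ha, hy g, hx g, smul_comm] at h
  exact (smul_right_injective M (lam g).ne_zero h).symm

theorem eigenspace_bot_or_simple_over_fixed_subalgebra_general
    {A : Type*} [Ring A] [Algebra ℂ A]
    {G : Type*} [Group G] [Finite G] (ρ : G →* (A ≃ₐ[ℂ] A))
    {M : Type*} [AddCommGroup M] [Module ℂ M] [Module A M] [IsScalarTower ℂ A M]
    [IsSimpleModule A M]
    (ψ : G →* (M ≃ₗ[ℂ] M))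
    (hψ : ∀ (g : G) (a : A) (m : M), ψ g (a • m) = (ρ g a) • ψ g m)
    (lam : G →* ℂˣ) :
    eigenspaceOfCharacter ρ ψ hψ lam = ⊥ ∨
      IsSimpleModule (fixedSubalgebra ρ) (eigenspaceOfCharacter ρ ψ hψ lam) := by
  cases nonempty_fintype G
  refine (eq_or_ne _ ⊥).imp id fun hne => ?_
  have : Nontrivial (eigenspaceOfCharacter ρ ψ hψ lam) := Submodule.nontrivial_iff_ne_bot.mpr hne
  refine isSimpleModule_iff_toSpanSingleton_surjective.mpr ⟨this, fun x hx y => ?_⟩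
  obtain ⟨a, ha⟩ := IsSimpleModule.toSpanSingleton_surjective A
    (Submodule.coe_eq_zero.not.mpr hx) (y : M)
  have hfix := map_smul_eq_of_mem_eigenspaceOfCharacter ρ ψ hψ lam x.2 y.2 ha
  exact ⟨⟨groupAverage ρ a, groupAverage_mem_fixedSubalgebra ρ a⟩,
    Subtype.ext (groupAverage_smul_of_forall_smul_eq hfix)⟩

/-- Let `A` be a `ℂ`-algebra of countable dimension, `G` a finite group
acting on `A` by `ℂ`-algebra automorphisms, `M` a simple `A`-module, and
`ψ : G → GL_ℂ(M)` a group homomorphism with `ψ(g)(a • m) = (g·a) • ψ(g)(m)`.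
Then for every group homomorphism `λ : G → ℂˣ`, the eigenspace `M^λ` is either zero or
a simple module over the fixed-point subalgebra `A^G`. -/
theorem eigenspace_bot_or_simple_over_fixed_subalgebra
    {A : Type*} [Ring A] [Algebra ℂ A]
    (hA : Module.rank ℂ A ≤ ℵ₀)
    {G : Type*} [Group G] [Finite G] (ρ : G →* (A ≃ₐ[ℂ] A))
    {M : Type*} [AddCommGroup M] [Module ℂ M] [Module A M] [IsScalarTower ℂ A M]
    [IsSimpleModule A M]
    (ψ : G →* (M ≃ₗ[ℂ] M))
    (hψ : ∀ (g : G) (a : A) (m : M), ψ g (a • m) = (ρ g a) • ψ g m)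
    (lam : G →* ℂˣ) :
    eigenspaceOfCharacter ρ ψ hψ lam = ⊥ ∨
      IsSimpleModule (fixedSubalgebra ρ) (eigenspaceOfCharacter ρ ψ hψ lam) :=
  eigenspace_bot_or_simple_over_fixed_subalgebra_general ρ ψ hψ lam
end

section
/- Let A be an associative unital ℂ-algebra of countable dimension, let g be a ℂ-algebra automorphism of A of finite order T, and let M be a simple A-module. Suppose φ : M → M is a ℂ-linear bijection with φ(a•m) = (g·a)•φ(m) for all a ∈ A, m ∈ M, and φ^T = id_M. Fix a primitive T-th root of unity η, and set M_i = {m ∈ M : φ(m) = η^i m} and A_j = {a ∈ A : g·a = η^j a} for i, j ∈ ℤ/Tℤ. Then: (1) M = ⊕_{i=0}^{T-1} M_i and A_j • M_i ⊆ M_{i+j mod T}; (2) each nonzero M_i is a simple module over the fixed-point subalgebra A^{⟨g⟩}; (3) for i ≠ j, nonzero M_i and M_j are non-isomorphic as A^{⟨g⟩}-modules. -/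
open scoped Cardinal DirectSum

/-- The fixed-point subalgebra `A^⟨g⟩` of a `ℂ`-algebra automorphism `g` of `A`. -/
def cyclicFixedSubalgebra {A : Type*} [Ring A] [Algebra ℂ A] (g : A ≃ₐ[ℂ] A) :
    Subalgebra ℂ A where
  carrier := {a : A | g a = a}
  mul_mem' {x y} hx hy := by
    have hx' : g x = x := hx
    have hy' : g y = y := hy
    show g (x * y) = x * y
    rw [map_mul, hx', hy']
  add_mem' {x y} hx hy := by
    have hx' : g x = x := hx
    have hy' : g y = y := hy
    show g (x + y) = x + y
    rw [map_add, hx', hy']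
  algebraMap_mem' r := by
    show g (algebraMap ℂ A r) = algebraMap ℂ A r
    exact g.commutes r

/-- The `η^i`-eigenspace `M_i = {m ∈ M : φ(m) = η^i m}` of a `g`-equivariant linear
bijection `φ` of an `A`-module `M`, regarded as a module over the fixed-point
subalgebra `A^⟨g⟩`. -/
def phiEigenspace {A : Type*} [Ring A] [Algebra ℂ A] (g : A ≃ₐ[ℂ] A)
    {M : Type*} [AddCommGroup M] [Module ℂ M] [Module A M] [IsScalarTower ℂ A M]
    {T : ℕ} (η : ℂ) (φ : M ≃ₗ[ℂ] M)
    (hφ : ∀ (a : A) (m : M), φ (a • m) = (g a) • φ m) (i : ZMod T) :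
    Submodule (cyclicFixedSubalgebra g) M where
  carrier := {m : M | φ m = η ^ i.val • m}
  add_mem' {x y} hx hy := by
    have hx' : φ x = η ^ i.val • x := hx
    have hy' : φ y = η ^ i.val • y := hy
    show φ (x + y) = η ^ i.val • (x + y)
    rw [map_add, hx', hy', smul_add]
  zero_mem' := by
    show φ 0 = η ^ i.val • (0 : M)
    simp
  smul_mem' := by
    rintro ⟨a, ha⟩ m hm
    have ha' : g a = a := ha
    have hm' : φ m = η ^ i.val • m := hm
    show φ (a • m) = η ^ i.val • (a • m)
    rw [hφ a m, ha', hm']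
    exact smul_comm a (η ^ i.val) m

/-- The eigenspace `A_j = {a ∈ A : g·a = η^j a}` of the automorphism `g`. -/
def autEigenspace {A : Type*} [Ring A] [Algebra ℂ A] (g : A ≃ₐ[ℂ] A)
    {T : ℕ} (η : ℂ) (j : ZMod T) : Set A :=
  {a : A | g a = η ^ j.val • a}

/-!
Because `φ ^ T = 1` and `η` is a primitive `T`-th root of unity, the averages
`P i = T⁻¹ • ∑ k < T, η ^ (-i k) • φ ^ k` are projections onto the eigenspaces `M_i` that sum to
the identity, and for `m ∈ M_i` the equivariance of `φ` gives `P i (a • m) = R a • m`, where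
`R = T⁻¹ • ∑ k < T, g ^ k` is the averaging (Reynolds) operator of `A` onto `A^⟨g⟩`.
Simplicity of `M_i` follows at once: if `a • n = w` with `n, w ∈ M_i`, then `R a • n = w`.

For non-isomorphy we need Dixmier's lemma: an endomorphism `f` of a simple module of countable
dimension over `ℂ` is a scalar, since otherwise the resolvents `(f - c)⁻¹`, `c ∈ ℂ`, would be
uncountably many linearly independent elements of a space of countable dimension. Hence for
nonzero `u ∈ M_i`, `v ∈ M_j` with `i ≠ j` (so `v` is not a multiple of `u`) there is `a ∈ A`
with `a • u = u` and `a • v = 0`. Then `R a ∈ A^⟨g⟩` still fixes `u` and kills `v`, which no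
`A^⟨g⟩`-isomorphism `M_i ≅ M_j` sending `u` to `v` can allow.
-/

open Finset

theorem ZMod.sum_val_eq_sum_range {T : ℕ} [NeZero T] {β : Type*} [AddCommMonoid β]
    (f : ℕ → β) : ∑ i : ZMod T, f i.val = ∑ k ∈ range T, f k := by
  obtain ⟨n, rfl⟩ := Nat.exists_eq_succ_of_ne_zero (NeZero.ne T)
  -- `ZMod (n + 1)` is `Fin (n + 1)` by definition, with `ZMod.val` the coercion to `ℕ`.
  exact Fin.sum_univ_eq_sum_range f (n + 1)

namespace IsPrimitiveRoot

variable {K : Type*} [Field K] {T : ℕ} [NeZero T] {ζ : K}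

theorem sum_pow_pow_val_eq_ite (hζ : IsPrimitiveRoot ζ T) {k : ℕ} (hk : k < T) :
    ∑ i : ZMod T, (ζ ^ k) ^ i.val = if k = 0 then (T : K) else 0 := by
  rw [ZMod.sum_val_eq_sum_range fun n => (ζ ^ k) ^ n]
  split_ifs with hk0
  · simp [hk0]
  · have hζk : ζ ^ k ≠ 1 := hζ.pow_ne_one_of_pos_of_lt hk0 hk
    rw [geom_sum_eq hζk, ← pow_mul, mul_comm, pow_mul, hζ.pow_eq_one, one_pow, sub_self,
      zero_div]

theorem pow_val_injective (hζ : IsPrimitiveRoot ζ T) :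
    Function.Injective fun i : ZMod T => ζ ^ i.val := fun _ _ h =>
  ZMod.val_injective T (hζ.pow_inj (ZMod.val_lt _) (ZMod.val_lt _) h)

end IsPrimitiveRoot

section PowAverage

variable {K V : Type*} [Field K] [AddCommGroup V] [Module K V]

noncomputable def powAverage (T : ℕ) (τ : Module.End K V) : Module.End K V :=
  (T : K)⁻¹ • ∑ k ∈ range T, τ ^ k

variable {T : ℕ}

theorem mul_powAverage {τ : Module.End K V} (hτ : τ ^ T = 1) :
    τ * powAverage T τ = powAverage T τ := by
  have h : (τ - 1) * ∑ k ∈ range T, τ ^ k = 0 := by rw [mul_geom_sum, hτ, sub_self]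
  rw [sub_mul, one_mul, sub_eq_zero] at h
  rw [powAverage, mul_smul_comm, h]

theorem powAverage_apply_of_apply_eq (hT : (T : K) ≠ 0) {τ : Module.End K V} {v : V}
    (hv : τ v = v) : powAverage T τ v = v := by
  have hpow (k : ℕ) : (τ ^ k) v = v := by rw [Module.End.pow_apply, Function.iterate_fixed hv]
  simp [powAverage, LinearMap.sum_apply, hpow, ← Nat.cast_smul_eq_nsmul K, smul_smul, hT]

theorem powAverage_apply_smul {A M : Type*} [Ring A] [Algebra K A] [AddCommGroup M] [Module K M]
    [Module A M] [IsScalarTower K A M] {γ : Module.End K A} {τ : Module.End K M} {m : M}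
    (h : ∀ b : A, τ (b • m) = γ b • m) (b : A) :
    powAverage T τ (b • m) = powAverage T γ b • m := by
  have hpow (k : ℕ) : ∀ b : A, (τ ^ k) (b • m) = (γ ^ k) b • m := by
    induction k with
    | zero => simp
    | succ k ih =>
      intro b
      rw [pow_succ', Module.End.mul_apply, ih, h, ← Module.End.mul_apply, ← pow_succ']
  simp [powAverage, LinearMap.sum_apply, hpow, Finset.sum_smul, smul_assoc]

noncomputable def eigenProj (η : K) (σ : Module.End K V) (i : ZMod T) : Module.End K V :=
  powAverage T ((η ^ i.val)⁻¹ • σ)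

variable [NeZero T] {η : K} {σ : Module.End K V}

theorem apply_eigenProj (hη : IsPrimitiveRoot η T) (hσ : σ ^ T = 1) (i : ZMod T) (v : V) :
    σ (eigenProj η σ i v) = η ^ i.val • eigenProj η σ i v := by
  have hT : ((η ^ i.val)⁻¹ • σ) ^ T = 1 := by
    rw [smul_pow, hσ, inv_pow, ← pow_mul, mul_comm, pow_mul, hη.pow_eq_one, one_pow, inv_one,
      one_smul]
  have h := congr($(mul_powAverage hT) v)
  rw [Module.End.mul_apply, LinearMap.smul_apply] at h
  rw [eigenProj]
  conv_rhs => rw [← h]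
  rw [smul_inv_smul₀ (pow_ne_zero _ (hη.ne_zero (NeZero.ne T)))]

theorem eigenProj_apply_of_apply_eq (hη : IsPrimitiveRoot η T) {i : ZMod T} {v : V}
    (hv : σ v = η ^ i.val • v) : eigenProj η σ i v = v := by
  have := hη.neZero'
  refine powAverage_apply_of_apply_eq (NeZero.ne _) ?_
  rw [LinearMap.smul_apply, hv, inv_smul_smul₀ (pow_ne_zero _ (hη.ne_zero (NeZero.ne T)))]

theorem sum_eigenProj_apply (hη : IsPrimitiveRoot η T) (v : V) :
    ∑ i : ZMod T, eigenProj η σ i v = v := by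
  have := hη.neZero'
  have horth (k : ℕ) (hk : k ∈ range T) :
      ∑ i : ZMod T, ((η ^ i.val)⁻¹ • σ) ^ k = if k = 0 then (T : K) • 1 else 0 := by
    simp_rw [smul_pow, ← Finset.sum_smul, inv_pow, ← pow_mul, mul_comm _ k, pow_mul, ← inv_pow,
      hη.inv.sum_pow_pow_val_eq_ite (mem_range.1 hk)]
    split_ifs with hk0 <;> simp [hk0]
  simp_rw [eigenProj, powAverage, LinearMap.smul_apply, ← smul_sum, ← LinearMap.sum_apply,
    sum_comm (s := univ), sum_congr rfl horth]
  simp [Nat.pos_of_neZero T, smul_smul, NeZero.ne ((T : ℕ) : K)]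

theorem isInternal_of_mem_iff_apply_eq_pow_val {S : Type*} [Ring S] [Module S V]
    (hη : IsPrimitiveRoot η T) (hσ : σ ^ T = 1) (N : ZMod T → Submodule S V)
    (hN : ∀ i v, v ∈ N i ↔ σ v = η ^ i.val • v) : DirectSum.IsInternal N := by
  refine DirectSum.isInternal_submodule_of_iSupIndep_of_iSup_eq_top ?_
    (Submodule.eq_top_iff'.2 fun v => ?_)
  · have hind := σ.eigenspaces_iSupIndep.comp hη.pow_val_injective
    rw [iSupIndep_iff_finsetSum_eq_zero_imp_eq_zero] at hind ⊢
    exact fun s v hv => hind s v fun i hi => Module.End.mem_eigenspace_iff.2 ((hN i _).1 (hv i hi))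
  · rw [← sum_eigenProj_apply hη v]
    exact Submodule.sum_mem_iSup fun i => (hN i _).2 (apply_eigenProj hη hσ i v)

end PowAverage

section Dixmier

open Polynomial

variable {K : Type*} [Field K]
  {A M : Type*} [Ring A] [Algebra K A] [AddCommGroup M] [Module K M] [Module A M]
  [IsScalarTower K A M] [IsSimpleModule A M]

theorem IsSimpleModule.rank_end_le : Module.rank K (Module.End A M) ≤ Module.rank K M := by
  have := IsSimpleModule.nontrivial A M
  obtain ⟨u, hu⟩ := exists_ne (0 : M)
  refine LinearMap.rank_le_of_injective (LinearMap.applyₗ' K u) ?_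
  rw [injective_iff_map_eq_zero]
  intro f hf
  ext x
  obtain ⟨a, rfl⟩ := IsSimpleModule.toSpanSingleton_surjective A hu x
  simp_all

theorem IsSimpleModule.rank_le_aleph0 (hA : Module.rank K A ≤ ℵ₀) : Module.rank K M ≤ ℵ₀ := by
  have := IsSimpleModule.nontrivial A M
  obtain ⟨u, hu⟩ := exists_ne (0 : M)
  have hle := LinearMap.lift_rank_le_of_surjective
    ((LinearMap.toSpanSingleton A M u).restrictScalars K)
    (IsSimpleModule.toSpanSingleton_surjective A hu)
  exact Cardinal.lift_le_aleph0.1 (hle.trans (Cardinal.lift_le_aleph0.2 hA))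

variable [IsAlgClosed K]

theorem spectrum.isUnit_aeval_of_eq_empty {R : Type*} [Ring R] [Algebra K R] {a : R}
    (h : spectrum K a = ∅) {p : K[X]} (hp : p ≠ 0) : IsUnit (aeval a p) := by
  by_cases hdeg : 0 < p.degree
  · rw [← spectrum.zero_notMem_iff K, spectrum.map_polynomial_aeval_of_degree_pos a p hdeg, h,
      Set.image_empty]
    exact Set.notMem_empty 0
  · obtain ⟨c, rfl⟩ : ∃ c, p = C c := ⟨_, eq_C_of_degree_le_zero (not_lt.1 hdeg)⟩
    rw [aeval_C]
    exact (isUnit_iff_ne_zero.2 (C_ne_zero.1 hp)).map _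

theorem spectrum.linearIndependent_resolvent {R : Type*} [Ring R] [Nontrivial R] [Algebra K R]
    {a : R} (h : spectrum K a = ∅) : LinearIndependent K (resolvent a : K → R) := by
  classical
  have hres (c : K) : (a - algebraMap K R c) * resolvent a c = -1 := by
    rw [← neg_sub, neg_mul, resolvent, Ring.mul_inverse_cancel _
      (spectrum.notMem_iff.1 (h ▸ Set.notMem_empty c))]
  rw [linearIndependent_iff']
  intro s l hl c₀ hc₀
  -- Multiplying `∑ l c • (c - a)⁻¹ = 0` by `∏ c ∈ s, (a - c)` gives `q(a) = 0`; as nonzero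
  -- polynomials in `a` are units, `q = 0`, and evaluating `q` at `c₀` isolates `l c₀`.
  set q : K[X] := ∑ c ∈ s, l c • Lagrange.nodal (s.erase c) id with hq_def
  have hq : aeval a q = 0 := by
    have := congr(aeval a (Lagrange.nodal s id) * $hl)
    rw [mul_zero, Finset.mul_sum] at this
    rw [← neg_eq_zero, ← this, hq_def, map_sum, ← sum_neg_distrib]
    refine sum_congr rfl fun c hc => ?_
    rw [Lagrange.nodal_eq_mul_nodal_erase hc, mul_comm (X - C _)]
    simp only [map_mul, map_smul, map_sub, aeval_X, aeval_C, id_eq,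
      mul_smul_comm, mul_assoc, hres, mul_neg_one, smul_neg]
  have hq0 : q = 0 := by
    by_contra hq0
    exact (spectrum.isUnit_aeval_of_eq_empty h hq0).ne_zero hq
  have := congr(eval c₀ $hq0)
  rw [eval_zero, eval_finsetSum, ← add_sum_erase s _ hc₀, sum_eq_zero, add_zero, eval_smul,
    smul_eq_mul] at this
  · exact (mul_eq_zero.1 this).resolve_right
      (Lagrange.eval_nodal_not_at_node fun c hc => (ne_of_mem_erase hc).symm)
  · intro c hc
    rw [eval_smul, smul_eq_mul, mul_eq_zero]
    exact Or.inr (Lagrange.eval_nodal_at_node (v := id)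
      (mem_erase.2 ⟨(ne_of_mem_erase hc).symm, hc₀⟩))

theorem spectrum.nonempty_of_rank_le_aleph0 (hK : ℵ₀ < #K) {R : Type*} [Ring R] [Nontrivial R]
    [Algebra K R] (hR : Module.rank K R ≤ ℵ₀) (a : R) : (spectrum K a).Nonempty := by
  rw [Set.nonempty_iff_ne_empty]
  intro h
  have hli := (spectrum.linearIndependent_resolvent h).cardinal_lift_le_rank
  exact (Cardinal.aleph0_lt_lift.2 hK).not_ge (hli.trans (Cardinal.lift_le_aleph0.2 hR))

theorem IsSimpleModule.exists_eq_algebraMap (hK : ℵ₀ < #K) (hM : Module.rank K M ≤ ℵ₀)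
    (f : Module.End A M) : ∃ c : K, f = algebraMap K (Module.End A M) c := by
  have := IsSimpleModule.nontrivial A M
  obtain ⟨c, hc⟩ := spectrum.nonempty_of_rank_le_aleph0 hK (rank_end_le.trans hM) f
  refine ⟨c, (sub_eq_zero.1 ?_).symm⟩
  by_contra hne
  exact hc ((Module.End.isUnit_iff _).2 (LinearMap.bijective_of_ne_zero hne))

theorem IsSimpleModule.exists_eq_smul_of_forall_smul_eq_zero (hK : ℵ₀ < #K)
    (hM : Module.rank K M ≤ ℵ₀) {u v : M} (hu : u ≠ 0) (h : ∀ a : A, a • u = 0 → a • v = 0) :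
    ∃ c : K, v = c • u := by
  have hsurj := IsSimpleModule.toSpanSingleton_surjective A hu
  have hker : LinearMap.ker (LinearMap.toSpanSingleton A M u) ≤
      LinearMap.ker (LinearMap.toSpanSingleton A M v) := h
  let e := LinearMap.quotKerEquivOfSurjective _ hsurj
  let f : Module.End A M := ((LinearMap.ker _).liftQ _ hker).comp e.symm.toLinearMap
  have hfu : f u = v := by
    have : e.symm u = Submodule.Quotient.mk 1 := e.symm_apply_eq.2 (one_smul A u).symm
    simp [f, this]
  obtain ⟨c, hc⟩ := exists_eq_algebraMap hK hM f
  exact ⟨c, by rw [← hfu, hc, Module.algebraMap_end_apply]⟩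

theorem IsSimpleModule.exists_smul_eq_zero_and_smul_eq_self (hK : ℵ₀ < #K)
    (hM : Module.rank K M ≤ ℵ₀) {u v : M} (hu : u ≠ 0) (hv : ∀ c : K, v ≠ c • u) :
    ∃ a : A, a • u = 0 ∧ a • v = v := by
  obtain ⟨a, hau, hav⟩ : ∃ a : A, a • u = 0 ∧ a • v ≠ 0 := by
    by_contra! h
    obtain ⟨c, hc⟩ := exists_eq_smul_of_forall_smul_eq_zero hK hM hu h
    exact hv c hc
  obtain ⟨b, hb⟩ := IsSimpleModule.toSpanSingleton_surjective A hav v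
  exact ⟨b * a, by rw [mul_smul, hau, smul_zero], by rw [mul_smul]; exact hb⟩

end Dixmier

section EigenspaceDecomposition

variable {A : Type*} [Ring A] [Algebra ℂ A] {g : A ≃ₐ[ℂ] A}
  {M : Type*} [AddCommGroup M] [Module ℂ M] [Module A M] [IsScalarTower ℂ A M]
  {φ : M ≃ₗ[ℂ] M} {hφ : ∀ (a : A) (m : M), φ (a • m) = (g a) • φ m}
  {T : ℕ} {η : ℂ}

theorem mem_phiEigenspace {i : ZMod T} {m : M} :
    m ∈ phiEigenspace g η φ hφ i ↔ φ m = η ^ i.val • m := Iff.rfl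

theorem powAverage_mem_cyclicFixedSubalgebra (hg : g ^ T = 1) (b : A) :
    powAverage T g.toLinearMap b ∈ cyclicFixedSubalgebra g := by
  have hgT : g.toLinearMap ^ T = 1 := by rw [← AlgEquiv.pow_toLinearMap, hg]; rfl
  exact congr($(mul_powAverage hgT) b)

variable [NeZero T]

theorem smul_mem_phiEigenspace (hη : η ^ T = 1) {i j : ZMod T} {a : A}
    (ha : a ∈ autEigenspace g η j) {m : M} (hm : m ∈ phiEigenspace g η φ hφ i) :
    a • m ∈ phiEigenspace g η φ hφ (i + j) := by
  have ha : g a = η ^ j.val • a := ha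
  rw [mem_phiEigenspace] at hm ⊢
  rw [hφ, ha, hm, smul_assoc, smul_comm a, smul_smul, ZMod.val_add, ← pow_eq_pow_mod _ hη,
    pow_add, mul_comm]

theorem isInternal_phiEigenspace (hη : IsPrimitiveRoot η T) (hφT : φ ^ T = 1) :
    DirectSum.IsInternal fun i : ZMod T => phiEigenspace g η φ hφ i := by
  have hσ : (φ : Module.End ℂ M) ^ T = 1 := by
    ext m
    rw [Module.End.pow_apply, LinearEquiv.coe_coe, ← LinearEquiv.coe_pow, hφT]
    rfl
  exact isInternal_of_mem_iff_apply_eq_pow_val hη hσ _ fun _ _ => Iff.rfl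

theorem eigenProj_smul (hη : IsPrimitiveRoot η T) {i : ZMod T} {m : M}
    (hm : m ∈ phiEigenspace g η φ hφ i) (b : A) :
    eigenProj η φ.toLinearMap i (b • m) = powAverage T g.toLinearMap b • m := by
  refine powAverage_apply_smul (fun b => ?_) b
  rw [LinearMap.smul_apply, LinearEquiv.coe_coe, hφ, mem_phiEigenspace.1 hm, smul_comm,
    inv_smul_smul₀ (pow_ne_zero _ (hη.ne_zero (NeZero.ne T))), AlgEquiv.toLinearMap_apply]

variable [IsSimpleModule A M]

theorem isSimpleModule_phiEigenspace (hη : IsPrimitiveRoot η T) (hg : g ^ T = 1) {i : ZMod T}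
    (hi : phiEigenspace g η φ hφ i ≠ ⊥) :
    IsSimpleModule (cyclicFixedSubalgebra g) (phiEigenspace g η φ hφ i) := by
  refine isSimpleModule_iff_toSpanSingleton_surjective.2
    ⟨Submodule.nontrivial_iff_ne_bot.2 hi, fun n hn w => ?_⟩
  obtain ⟨a, ha⟩ := IsSimpleModule.toSpanSingleton_surjective A
    (Subtype.coe_ne_coe.2 hn : (n : M) ≠ 0) w
  refine ⟨⟨_, powAverage_mem_cyclicFixedSubalgebra hg a⟩, Subtype.ext ?_⟩
  rw [LinearMap.toSpanSingleton_apply] at ha ⊢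
  rw [SetLike.val_smul, Subalgebra.smul_def, ← eigenProj_smul hη n.2, ha,
    eigenProj_apply_of_apply_eq hη w.2]

theorem exists_mem_cyclicFixedSubalgebra_smul_eq_self_and_smul_eq_zero
    (hA : Module.rank ℂ A ≤ ℵ₀) (hη : IsPrimitiveRoot η T) (hg : g ^ T = 1) {i j : ZMod T}
    (hij : i ≠ j) {u v : M} (hu : u ∈ phiEigenspace g η φ hφ i) (hu0 : u ≠ 0)
    (hv : v ∈ phiEigenspace g η φ hφ j) (hv0 : v ≠ 0) :
    ∃ c ∈ cyclicFixedSubalgebra g, c • u = u ∧ c • v = 0 := by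
  have hvu (c : ℂ) : v ≠ c • u := by
    rintro rfl
    refine hij (hη.pow_val_injective (smul_left_injective ℂ hv0 ?_))
    show η ^ i.val • c • u = η ^ j.val • c • u
    rw [← mem_phiEigenspace.1 hv, map_smul, mem_phiEigenspace.1 hu, smul_comm]
  obtain ⟨a, hau, hav⟩ := IsSimpleModule.exists_smul_eq_zero_and_smul_eq_self (A := A)
    (Cardinal.mk_complex ▸ Cardinal.aleph0_lt_continuum) (IsSimpleModule.rank_le_aleph0 hA) hu0 hvu
  refine ⟨_, powAverage_mem_cyclicFixedSubalgebra hg (1 - a), ?_, ?_⟩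
  · rw [← eigenProj_smul hη hu, sub_smul, one_smul, hau, sub_zero,
      eigenProj_apply_of_apply_eq hη hu]
  · rw [← eigenProj_smul hη hv, sub_smul, one_smul, hav, sub_self, map_zero]

theorem not_nonempty_linearEquiv_phiEigenspace (hA : Module.rank ℂ A ≤ ℵ₀)
    (hη : IsPrimitiveRoot η T) (hg : g ^ T = 1) {i j : ZMod T} (hij : i ≠ j)
    (hi : phiEigenspace g η φ hφ i ≠ ⊥) :
    ¬ Nonempty (phiEigenspace g η φ hφ i ≃ₗ[cyclicFixedSubalgebra g] phiEigenspace g η φ hφ j) := by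
  rintro ⟨ψ⟩
  obtain ⟨u, hu, hu0⟩ := (Submodule.ne_bot_iff _).1 hi
  have hv0 : (ψ ⟨u, hu⟩ : M) ≠ 0 := by simpa using hu0
  obtain ⟨c, hc, hcu, hcv⟩ := exists_mem_cyclicFixedSubalgebra_smul_eq_self_and_smul_eq_zero
    hA hη hg hij hu hu0 (ψ ⟨u, hu⟩).2 hv0
  have hfix : (⟨c, hc⟩ : cyclicFixedSubalgebra g) • (⟨u, hu⟩ : phiEigenspace g η φ hφ i) =
      ⟨u, hu⟩ := Subtype.ext hcu
  apply hv0
  rw [← hcv]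
  conv_lhs => rw [← hfix, map_smul]
  rfl

end EigenspaceDecomposition

/-- Let `A` be a `ℂ`-algebra of countable dimension, `g` a `ℂ`-algebra
automorphism of `A` of finite order `T`, and `M` a simple `A`-module.  Suppose
`φ : M → M` is a `ℂ`-linear bijection with `φ(a • m) = (g·a) • φ(m)` and `φ^T = id`.
Fix a primitive `T`-th root of unity `η`, and set `M_i = {m : φ m = η^i m}`,
`A_j = {a : g·a = η^j a}`.  Then:
(1) `M = ⊕_i M_i` and `A_j • M_i ⊆ M_{i+j mod T}`;
(2) each nonzero `M_i` is a simple `A^⟨g⟩`-module;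
(3) for `i ≠ j`, nonzero `M_i` and `M_j` are non-isomorphic as `A^⟨g⟩`-modules. -/
theorem eigenspace_decomposition_simple_nonisomorphic
    {A : Type*} [Ring A] [Algebra ℂ A]
    (hA : Module.rank ℂ A ≤ ℵ₀)
    (g : A ≃ₐ[ℂ] A) {T : ℕ} (hT : 0 < T) (hg : orderOf g = T)
    {M : Type*} [AddCommGroup M] [Module ℂ M] [Module A M] [IsScalarTower ℂ A M]
    [IsSimpleModule A M]
    (φ : M ≃ₗ[ℂ] M)
    (hφ : ∀ (a : A) (m : M), φ (a • m) = (g a) • φ m)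
    (hφT : φ ^ T = 1)
    (η : ℂ) (hη : IsPrimitiveRoot η T) :
    (DirectSum.IsInternal fun i : ZMod T => phiEigenspace g η φ hφ i) ∧
    (∀ (i j : ZMod T), ∀ a ∈ autEigenspace g η j, ∀ m ∈ phiEigenspace g η φ hφ i,
        a • m ∈ phiEigenspace g η φ hφ (i + j)) ∧
    (∀ i : ZMod T, phiEigenspace g η φ hφ i ≠ ⊥ →
        IsSimpleModule (cyclicFixedSubalgebra g) (phiEigenspace g η φ hφ i)) ∧
    (∀ i j : ZMod T, i ≠ j →
        phiEigenspace g η φ hφ i ≠ ⊥ → phiEigenspace g η φ hφ j ≠ ⊥ →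
        ¬ Nonempty
          ((phiEigenspace g η φ hφ i) ≃ₗ[cyclicFixedSubalgebra g]
            (phiEigenspace g η φ hφ j))) := by
  have : NeZero T := NeZero.of_pos hT
  have hgT : g ^ T = 1 := hg ▸ pow_orderOf_eq_one g
  exact ⟨isInternal_phiEigenspace hη hφT,
    fun _ _ _ ha _ hm => smul_mem_phiEigenspace hη.pow_eq_one ha hm,
    fun _ => isSimpleModule_phiEigenspace hη hgT,
    fun _ _ hij hi _ => not_nonempty_linearEquiv_phiEigenspace hA hη hgT hij hi⟩
end

section
/- Let A be an associative unital ℂ-algebra, G a finite group acting on A by ℂ-algebra automorphisms, and M an A-module. Let 𝓜 = ⊕_{a ∈ G} (a∘M), where a∘M is M with twisted A-action u •_{a∘M} m = (a⁻¹·u)•m, with A acting on 𝓜 componentwise; let G act ℂ-linearly on 𝓜 by permuting the summands, h·i_a(w) = i_{ha}(w), where i_a : M → 𝓜 is the inclusion of the summand a∘M. For an irreducible complex character χ of G let P_χ^A and P_χ^𝓜 denote the operator (χ(1)/|G|) Σ_{g∈G} χ(g⁻¹) g acting on A and on 𝓜 respectively, and let 1 denote the trivial character. Then for all u ∈ A and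 w ∈ 𝓜: (P_χ^A(u)) • (P_1^𝓜(w)) = P_χ^𝓜( u • (P_1^𝓜(w)) ). -/
open scoped BigOperators

section

variable {A : Type*} [Ring A] [Algebra ℂ A]
  {G : Type} [Group G] [Fintype G]
  {M : Type*} [AddCommGroup M] [Module A M] [Module ℂ M] [IsScalarTower ℂ A M]

/-- `χ : G → ℂ` is an irreducible complex character of the finite group `G`. -/
def IsIrreducibleCharacter (G : Type) [Group G] (χ : G → ℂ) : Prop :=
  ∃ V : FDRep ℂ G, CategoryTheory.Simple V ∧ ∀ g : G, χ g = FDRep.character V g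

/-- The isotypic projection `P_χ^A(u) = (χ(1)/|G|) ∑_{g ∈ G} χ(g⁻¹) (g·u)` on the
algebra `A`, for the `G`-action given by `ρ`. -/
noncomputable def projAlg (ρ : G →* (A ≃ₐ[ℂ] A)) (χ : G → ℂ) (u : A) : A :=
  (χ 1 / (Fintype.card G : ℂ)) • ∑ g : G, χ g⁻¹ • (ρ g u)

/-- The action of `u ∈ A` on `𝓜 = ⊕_{a ∈ G} (a ∘ M)` (realized as `G → M`),
acting componentwise through the twisted actions: `(u • f)(a) = (a⁻¹ · u) • f(a)`. -/
def twistedAct (ρ : G →* (A ≃ₐ[ℂ] A)) (u : A) (f : G → M) : G → M :=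
  fun a => (ρ a⁻¹ u) • f a

/-- The `G`-action on `𝓜 = ⊕_{a ∈ G} (a ∘ M)` permuting the summands:
`h • i_a(w) = i_{h a}(w)`, i.e. `(h • f)(x) = f(h⁻¹ x)`. -/
def permAct (h : G) (f : G → M) : G → M :=
  fun x => f (h⁻¹ * x)

/-- The isotypic projection `P_χ^𝓜 = (χ(1)/|G|) ∑_{g ∈ G} χ(g⁻¹) g` on
`𝓜 = ⊕_{a ∈ G} (a ∘ M)`, realized as `G → M` with the permutation `G`-action. -/
noncomputable def projMod (χ : G → ℂ) (f : G → M) : G → M :=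
  (χ 1 / (Fintype.card G : ℂ)) • ∑ g : G, χ g⁻¹ • permAct (M := M) g f

/-- Lemma `actionP`.  For any irreducible complex character `χ` of the
finite group `G` acting on the `ℂ`-algebra `A` via `ρ`, any `A`-module `M`, any `u ∈ A`
and `w ∈ 𝓜 = ⊕_{a ∈ G} (a ∘ M)` (with `A` acting componentwise by the twisted actions
and `G` permuting the summands):
`(P_χ^A(u)) • (P_1^𝓜(w)) = P_χ^𝓜( u • (P_1^𝓜(w)) )`, where `1` is the trivial
character. -/
theorem projAlg_act_projMod_one (ρ : G →* (A ≃ₐ[ℂ] A)) (χ : G → ℂ)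
    (hχ : IsIrreducibleCharacter G χ) (u : A) (w : G → M) :
    twistedAct ρ (projAlg ρ χ u) (projMod (M := M) (fun _ => (1 : ℂ)) w) =
      projMod χ (twistedAct ρ u (projMod (M := M) (fun _ => (1 : ℂ)) w)) := by
  set c : M := ((1 : ℂ) / (Fintype.card G : ℂ)) • ∑ h : G, w h with hc
  have hP : ∀ x : G, projMod (M := M) (fun _ => (1 : ℂ)) w x = c := by
    intro x
    simp only [projMod, permAct, Pi.smul_apply, Finset.sum_apply, one_smul, hc]
    congr 1
    exact Equiv.sum_comp ((Equiv.inv G).trans (Equiv.mulRight x)) w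
  funext a
  have lhs : twistedAct ρ (projAlg ρ χ u) (projMod (M := M) (fun _ => (1 : ℂ)) w) a
      = (χ 1 / (Fintype.card G : ℂ)) • ∑ g : G, χ g⁻¹ • (ρ (a⁻¹ * g) u) • c := by
    simp only [twistedAct, hP, projAlg, map_smul, map_sum]
    rw [smul_assoc, Finset.sum_smul]
    congr 1
    refine Finset.sum_congr rfl fun g _ => ?_
    rw [smul_assoc]
    congr 2
    rw [← AlgEquiv.mul_apply, ← map_mul]
  have rhs : projMod χ (twistedAct ρ u (projMod (M := M) (fun _ => (1 : ℂ)) w)) a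
      = (χ 1 / (Fintype.card G : ℂ)) • ∑ g : G, χ g⁻¹ • (ρ (a⁻¹ * g) u) • c := by
    have hT : twistedAct ρ u (projMod (M := M) (fun _ => (1 : ℂ)) w)
        = fun b => (ρ b⁻¹ u) • c := by
      funext b; simp [twistedAct, hP]
    rw [hT]
    simp only [projMod, permAct, Pi.smul_apply, Finset.sum_apply]
    congr 1
    refine Finset.sum_congr rfl fun g _ => ?_
    rw [mul_inv_rev, inv_inv]
  rw [lhs, rhs]

end
end

section
/- Let A be an associative unital ℂ-algebra, G a finite group acting on A by ℂ-algebra automorphisms, M an A-module, and ψ : G → GL_ℂ(M) a group homomorphism satisfying ψ(g)(a•m) = (g·a)•ψ(g)(m) for all g ∈ G, a ∈ A, m ∈ M. For an irreducible complex character χ of G let P_χ^A = (χ(1)/|G|) Σ_{g∈G} χ(g⁻¹) g acting on A, and for a function θ : G → ℂ let P_θ^M = (θ(1)/|G|) Σ_{g∈G} θ(g⁻¹) ψ(g) acting on M. Then for every group homomorphism λ : G → ℂ^×, every irreducible character χ of G, and all u ∈ A, w ∈ M: (P_χ^A(u)) • (P_λ^M(w)) = P_{λχ}^M( u • (P_λ^M(w))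 ), where λχ is the (irreducible) character g ↦ λ(g)χ(g). -/
open scoped BigOperators

section

variable {A : Type*} [Ring A] [Algebra ℂ A]
  {G : Type} [Group G] [Fintype G]
  {M : Type*} [AddCommGroup M] [Module A M] [Module ℂ M] [IsScalarTower ℂ A M]

/-- The projection `P_θ^M(w) = (θ(1)/|G|) ∑_{g ∈ G} θ(g⁻¹) ψ(g)(w)` on `M`, for a
function `θ : G → ℂ` and the `G`-action on `M` given by `ψ : G → GL_ℂ(M)`. -/
noncomputable def projRep (ψ : G →* (M ≃ₗ[ℂ] M)) (θ : G → ℂ) (w : M) : M :=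
  (θ 1 / (Fintype.card G : ℂ)) • ∑ g : G, θ g⁻¹ • (ψ g w)

lemma aux_smul_comm (c : ℂ) (a : A) (m : M) : a • (c • m) = c • (a • m) := by
  calc a • (c • m) = a • ((c • (1:A)) • m) := by rw [smul_assoc, one_smul]
    _ = (a * (c • (1:A))) • m := (smul_smul _ _ _)
    _ = (c • a) • m := by rw [Algebra.mul_smul_comm, mul_one]
    _ = c • (a • m) := smul_assoc _ _ _

lemma aux_eig (ψ : G →* (M ≃ₗ[ℂ] M)) (lam : G →* ℂˣ) (w : M) (g : G) :
    ψ g (projRep ψ (fun g => (lam g : ℂ)) w) =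
      (lam g : ℂ) • projRep ψ (fun g => (lam g : ℂ)) w := by
  unfold projRep
  rw [map_smul, map_sum, smul_comm]
  congr 1
  rw [Finset.smul_sum]
  refine Fintype.sum_equiv (Equiv.mulLeft g) _ _ fun k => ?_
  simp only [Equiv.coe_mulLeft, map_smul, smul_smul]
  rw [← LinearEquiv.trans_apply]
  have h1 : ψ k ≪≫ₗ ψ g = ψ (g * k) := (map_mul ψ g k).symm
  rw [h1]
  congr 1
  simp [mul_inv_rev, mul_comm, mul_assoc, mul_left_comm, ← Units.val_mul]

/-- Let `G` be a finite group acting on the `ℂ`-algebra `A` via `ρ` and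
`ψ : G → GL_ℂ(M)` a compatible action on an `A`-module `M`, i.e.
`ψ(g)(a • m) = (g·a) • ψ(g)(m)`.  Then for every group homomorphism `λ : G → ℂˣ`,
every irreducible character `χ` of `G`, and all `u ∈ A`, `w ∈ M`:
`(P_χ^A(u)) • (P_λ^M(w)) = P_{λχ}^M( u • (P_λ^M(w)) )`. -/
theorem projAlg_act_projRep (ρ : G →* (A ≃ₐ[ℂ] A)) (ψ : G →* (M ≃ₗ[ℂ] M))
    (hψ : ∀ (g : G) (a : A) (m : M), ψ g (a • m) = (ρ g a) • ψ g m)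
    (lam : G →* ℂˣ) (χ : G → ℂ) (hχ : IsIrreducibleCharacter G χ)
    (u : A) (w : M) :
    (projAlg ρ χ u) • (projRep ψ (fun g => (lam g : ℂ)) w) =
      projRep ψ (fun g => (lam g : ℂ) * χ g)
        (u • projRep ψ (fun g => (lam g : ℂ)) w) := by
  set P := projRep ψ (fun g => (lam g : ℂ)) w with hP
  show (projAlg ρ χ u) • P = _
  conv_rhs => unfold projRep
  unfold projAlg
  rw [smul_assoc, Finset.sum_smul]
  simp only [map_one, Units.val_one, one_mul]
  congr 1
  refine Finset.sum_congr rfl fun g _ => ?_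
  have key : ψ g P = (lam g : ℂ) • P := aux_eig ψ lam w g
  rw [hψ, key, aux_smul_comm, smul_smul, smul_assoc (χ g⁻¹) ((ρ g) u) P]
  congr 1
  have h2 : (lam g⁻¹ : ℂ) * (lam g : ℂ) = 1 := by
    rw [← Units.val_mul, ← map_mul, inv_mul_cancel, map_one, Units.val_one]
  calc χ g⁻¹ = ((lam g⁻¹ : ℂ) * (lam g : ℂ)) * χ g⁻¹ := by rw [h2, one_mul]
    _ = (lam g⁻¹ : ℂ) * χ g⁻¹ * (lam g : ℂ) := by ring

end
end

section
/- Let A and B be associative unital ℂ-algebras, let M be a simple A-module and N a simple B-module, and assume both M and N have countable dimension over ℂ. Then the tensor product M ⊗_ℂ N, with the natural action of A ⊗_ℂ B given by (a ⊗ b)•(m ⊗ n) = (a•m) ⊗ (b•n), is a simple A ⊗_ℂ B-module. -/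
/-!
By Dixmier's argument, every endomorphism `f` of a simple module of countable dimension over `ℂ`
is a scalar: `End_A M` is a division algebra, and a transcendental `f` would make the resolvents
`(f - c)⁻¹`, `c ∈ ℂ`, an uncountable linearly independent family. Jacobson density then lets `A`
act on any finite subset of `M` as an arbitrary `ℂ`-linear map, and likewise `B` on `N`. Given
`t ≠ 0` in `M ⊗ N`, choose functionals `φ, ψ` with `(φ ⊗ ψ) t = 1`; acting on `t` by `a ⊗ b`,
where `a` realises `φ(·) m` and `b` realises `ψ(·) n`, produces `m ⊗ n`. So `t` generates every
pure tensor, hence all of `M ⊗ N`.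
-/

open scoped Cardinal TensorProduct

universe u v w

theorem Subalgebra.isField_centralizer_centralizer_singleton {F D : Type*} [Field F]
    [DivisionRing D] [Algebra F D] (x : D) :
    IsField (Subalgebra.centralizer F (Set.centralizer {x})) where
  exists_pair_ne := ⟨0, 1, zero_ne_one⟩
  mul_comm a b := Subtype.ext <|
    Set.centralizer_centralizer_comm_of_comm (S := {x}) (by simp) _ a.2 _ b.2
  mul_inv_cancel {a} ha := ⟨⟨a⁻¹, Set.inv_mem_centralizer₀ a.2⟩,
    Subtype.ext <| mul_inv_cancel₀ <| Subtype.coe_injective.ne ha⟩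

theorem Transcendental.lift_cardinalMk_le_lift_rank {F : Type u} {D : Type v} [Field F]
    [DivisionRing D] [Algebra F D] {x : D} (hx : Transcendental F x) :
    Cardinal.lift.{v} #F ≤ Cardinal.lift.{u} (Module.rank F D) := by
  -- The double centralizer of `x` is a commutative subfield containing `x`, where the resolvents
  -- `(x - c)⁻¹` are known to be linearly independent.
  let K := Subalgebra.centralizer F (Set.centralizer {x})
  let _ : Field K := (Subalgebra.isField_centralizer_centralizer_singleton x).toField
  have hxK : Transcendental F (⟨x, Set.subset_centralizer_centralizer rfl⟩ : K) :=
    Subalgebra.transcendental_iff_transcendental_val.mpr hx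
  calc Cardinal.lift #F ≤ Cardinal.lift (Module.rank F K) :=
        hxK.linearIndependent_sub_inv.cardinal_lift_le_rank
    _ ≤ Cardinal.lift (Module.rank F D) :=
        Cardinal.lift_le.mpr (Subalgebra.toSubmodule K).rank_le

theorem Algebra.isAlgebraic_of_lift_rank_lt_lift_cardinalMk {F : Type u} {D : Type v} [Field F]
    [DivisionRing D] [Algebra F D]
    (h : Cardinal.lift.{u} (Module.rank F D) < Cardinal.lift.{v} #F) :
    Algebra.IsAlgebraic F D :=
  ⟨fun x => not_not.mp fun hx : Transcendental F x => h.not_ge hx.lift_cardinalMk_le_lift_rank⟩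

namespace IsSimpleModule

variable {F : Type u} {A : Type v} {M : Type w} [Field F] [Ring A] [Algebra F A]
  [AddCommGroup M] [Module F M] [Module A M] [IsScalarTower F A M] [IsSimpleModule A M]

theorem rank_end_le_s8 : Module.rank F (Module.End A M) ≤ Module.rank F M := by
  have := IsSimpleModule.nontrivial A M
  obtain ⟨m, hm⟩ := exists_ne (0 : M)
  refine (LinearMap.applyₗ' F m : Module.End A M →ₗ[F] M).rank_le_of_injective fun f g hfg => ?_
  by_contra hne
  exact hm ((LinearMap.bijective_of_ne_zero (sub_ne_zero.mpr hne)).injective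
    (by simpa [sub_eq_zero] using hfg))

/-- Dixmier's version of Schur's lemma. -/
theorem algebraMap_end_bijective_of_lift_rank_lt [IsAlgClosed F]
    (h : Cardinal.lift.{u} (Module.rank F M) < Cardinal.lift.{w} #F) :
    Function.Bijective (algebraMap F (Module.End A M)) := by
  classical -- the division ring instance on `Module.End A M` asks for decidable equality
  have : Algebra.IsAlgebraic F (Module.End A M) :=
    Algebra.isAlgebraic_of_lift_rank_lt_lift_cardinalMk
      ((Cardinal.lift_le.mpr rank_end_le_s8).trans_lt h)
  exact IsAlgClosed.algebraMap_bijective_of_isIntegral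

end IsSimpleModule

theorem IsSimpleModule.algebraMap_end_bijective_of_rank_le_aleph0 {A M : Type*} [Ring A]
    [Algebra ℂ A] [AddCommGroup M] [Module ℂ M] [Module A M] [IsScalarTower ℂ A M]
    [IsSimpleModule A M] (hM : Module.rank ℂ M ≤ ℵ₀) :
    Function.Bijective (algebraMap ℂ (Module.End A M)) :=
  algebraMap_end_bijective_of_lift_rank_lt <| (Cardinal.lift_le_aleph0.mpr hM).trans_lt <| by
    simpa [Cardinal.mk_complex] using Cardinal.aleph0_lt_continuum

theorem exists_smul_eq_of_algebraMap_end_surjective {R A M : Type*} [CommRing R] [Ring A]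
    [Algebra R A] [AddCommGroup M] [Module R M] [Module A M] [IsScalarTower R A M]
    [IsSemisimpleModule A M] (h : Function.Surjective (algebraMap R (Module.End A M)))
    (g : M →ₗ[R] M) (s : Finset M) : ∃ a : A, ∀ m ∈ s, a • m = g m := by
  let g' : Module.End (Module.End A M) M :=
    { g.toAddMonoidHom with
      map_smul' := fun φ m => by
        obtain ⟨c, rfl⟩ := h φ
        simp }
  obtain ⟨a, ha⟩ := jacobson_density g' s
  exact ⟨a, fun m hm => (ha m hm).symm⟩

namespace TensorProduct

theorem map_smulRight_smulRight {R M N : Type*} [CommRing R] [AddCommGroup M] [AddCommGroup N]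
    [Module R M] [Module R N] (φ : Module.Dual R M) (ψ : Module.Dual R N) (m : M) (n : N)
    (t : M ⊗[R] N) :
    map (φ.smulRight m) (ψ.smulRight n) t = dualDistrib R M N (φ ⊗ₜ ψ) t • m ⊗ₜ n := by
  induction t with
  | zero => simp
  | tmul x y =>
    rw [map_tmul, LinearMap.smulRight_apply, LinearMap.smulRight_apply, dualDistrib_apply,
      smul_tmul_smul]
  | add x y hx hy => simp [hx, hy, add_smul]

theorem dualDistrib_coord_tmul_coord {R M N ι κ : Type*} [CommRing R] [AddCommGroup M]
    [AddCommGroup N] [Module R M] [Module R N] (b : Module.Basis ι R M) (c : Module.Basis κ R N)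
    (i : ι) (j : κ) (t : M ⊗[R] N) :
    dualDistrib R M N (b.coord i ⊗ₜ c.coord j) t = (b.tensorProduct c).repr t (i, j) := by
  induction t with
  | zero => simp
  | tmul x y => simp [dualDistrib_apply, Module.Basis.tensorProduct_repr_tmul_apply, mul_comm]
  | add x y hx hy => simp [hx, hy]

theorem exists_dualDistrib_eq_one {K M N : Type*} [Field K] [AddCommGroup M] [AddCommGroup N]
    [Module K M] [Module K N] {t : M ⊗[K] N} (ht : t ≠ 0) :
    ∃ (φ : Module.Dual K M) (ψ : Module.Dual K N), dualDistrib K M N (φ ⊗ₜ ψ) t = 1 := by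
  let bM := Module.Basis.ofVectorSpace K M
  let bN := Module.Basis.ofVectorSpace K N
  obtain ⟨⟨i, j⟩, hij⟩ : ∃ p, (bM.tensorProduct bN).repr t p ≠ 0 := by
    by_contra! h
    exact ht ((bM.tensorProduct bN).repr.map_eq_zero_iff.mp (Finsupp.ext h))
  refine ⟨((bM.tensorProduct bN).repr t (i, j))⁻¹ • bM.coord i, bN.coord j, ?_⟩
  rw [← smul_tmul', map_smul, LinearMap.smul_apply, dualDistrib_coord_tmul_coord, smul_eq_mul,
    inv_mul_cancel₀ hij]

theorem exists_tmul_smul_eq_map {R A B M N : Type*} [CommRing R] [Ring A] [Ring B]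
    [AddCommGroup M] [Module R M] [Module A M] [AddCommGroup N] [Module R N] [Module B N]
    [Algebra R A] [Algebra R B] [Module (A ⊗[R] B) (M ⊗[R] N)]
    (hsmul : ∀ (a : A) (b : B) (m : M) (n : N),
      (a ⊗ₜ[R] b) • (m ⊗ₜ[R] n) = (a • m) ⊗ₜ[R] (b • n))
    (hA : ∀ (g : M →ₗ[R] M) (s : Finset M), ∃ a : A, ∀ m ∈ s, a • m = g m)
    (hB : ∀ (h : N →ₗ[R] N) (s : Finset N), ∃ b : B, ∀ n ∈ s, b • n = h n)
    (g : M →ₗ[R] M) (h : N →ₗ[R] N) (t : M ⊗[R] N) :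
    ∃ (a : A) (b : B), (a ⊗ₜ[R] b) • t = map g h t := by
  classical
  obtain ⟨S, rfl⟩ := exists_finset t
  obtain ⟨a, ha⟩ := hA g (S.image Prod.fst)
  obtain ⟨b, hb⟩ := hB h (S.image Prod.snd)
  refine ⟨a, b, ?_⟩
  simp only [Finset.smul_sum, map_sum, map_tmul, hsmul]
  exact Finset.sum_congr rfl fun p hp => by
    rw [ha _ (Finset.mem_image_of_mem _ hp), hb _ (Finset.mem_image_of_mem _ hp)]

theorem eq_top_of_tmul_mem {R S M N : Type*} [CommRing R] [Semiring S] [AddCommGroup M]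
    [Module R M] [AddCommGroup N] [Module R N] [Module S (M ⊗[R] N)]
    {P : Submodule S (M ⊗[R] N)} (h : ∀ m n, m ⊗ₜ[R] n ∈ P) : P = ⊤ :=
  Submodule.eq_top_iff'.mpr fun t => t.induction_on P.zero_mem h fun _ _ => P.add_mem

end TensorProduct

/-- Let `A` and `B` be associative unital `ℂ`-algebras, `M` a simple
`A`-module and `N` a simple `B`-module, both of countable dimension over `ℂ`.  Then
`M ⊗[ℂ] N`, with the natural `A ⊗[ℂ] B`-action determined by
`(a ⊗ b) • (m ⊗ n) = (a • m) ⊗ (b • n)`, is a simple `A ⊗[ℂ] B`-module. -/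
theorem tensorProduct_simple_of_simple_countable_dim
    {A B M N : Type*} [Ring A] [Algebra ℂ A] [Ring B] [Algebra ℂ B]
    [AddCommGroup M] [Module ℂ M] [Module A M] [IsScalarTower ℂ A M]
    [AddCommGroup N] [Module ℂ N] [Module B N] [IsScalarTower ℂ B N]
    [IsSimpleModule A M] [IsSimpleModule B N]
    (hM : Module.rank ℂ M ≤ ℵ₀) (hN : Module.rank ℂ N ≤ ℵ₀)
    [Module (A ⊗[ℂ] B) (M ⊗[ℂ] N)]
    (hsmul : ∀ (a : A) (b : B) (m : M) (n : N),
      (a ⊗ₜ[ℂ] b) • (m ⊗ₜ[ℂ] n) = (a • m) ⊗ₜ[ℂ] (b • n)) :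
    IsSimpleModule (A ⊗[ℂ] B) (M ⊗[ℂ] N) := by
  have hA := exists_smul_eq_of_algebraMap_end_surjective
    (IsSimpleModule.algebraMap_end_bijective_of_rank_le_aleph0 (A := A) hM).2
  have hB := exists_smul_eq_of_algebraMap_end_surjective
    (IsSimpleModule.algebraMap_end_bijective_of_rank_le_aleph0 (A := B) hN).2
  have := IsSimpleModule.nontrivial A M
  have := IsSimpleModule.nontrivial B N
  refine isSimpleModule_iff_toSpanSingleton_surjective.mpr ⟨inferInstance, fun t ht => ?_⟩
  obtain ⟨φ, ψ, hφψ⟩ := TensorProduct.exists_dualDistrib_eq_one ht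
  rw [← LinearMap.range_eq_top]
  refine TensorProduct.eq_top_of_tmul_mem fun m n => ?_
  obtain ⟨a, b, hab⟩ :=
    TensorProduct.exists_tmul_smul_eq_map hsmul hA hB (φ.smulRight m) (ψ.smulRight n) t
  rw [TensorProduct.map_smulRight_smulRight, hφψ, one_smul] at hab
  exact ⟨a ⊗ₜ b, hab⟩
end
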